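/- arXiv:2105.07513 — 4 statements merged into one kernel-verified Lean document; each statement's English description precedes it below -/
import Mathlib

section
/- Let X be a random variable of the form X = x + η where η has the Laplace distribution with location 0 and scale λ > 0, and let ℓ < x be a real number. Then the expectation of max(ℓ, X) equals x + (λ/2)·exp((ℓ − x)/λ). -/
/-!
Write `max ℓ (x + t) = (x + t) + max 0 (ℓ - x - t)`. Against the kernel `exp (-|t| / λ)`, the
linear part integrates to `2λx` because `t ↦ t exp (-|t| / λ)` is odd. The second part vanishes
for `t ≥ ℓ - x`; since `ℓ - x < 0`, only `t < 0` remains, where the kernel is `exp (t / λ)`, and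
the substitution `u = ℓ - x - t` turns it into the Gamma integral
`exp ((ℓ - x) / λ) ∫₀^∞ u exp (-u / λ) du = λ² exp ((ℓ - x) / λ)`.
-/

open Real MeasureTheory Set

theorem integrable_comp_abs_of_integrableOn_Ioi {E : Type*} [NormedAddCommGroup E]
    {f : ℝ → E} (hf : IntegrableOn f (Ioi 0)) : Integrable fun x => f |x| := by
  have hIio : IntegrableOn (fun x => f |x|) (Iio 0) :=
    ((IntegrableOn.comp_neg_Iio (c := 0) (by simpa using hf)).congr_fun
      fun x hx => by rw [abs_of_neg hx]) measurableSet_Iio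
  have hIci : IntegrableOn (fun x => f |x|) (Ici 0) := by
    refine (integrableOn_Ici_iff_integrableOn_Ioi).mpr
      (hf.congr_fun (fun x hx => ?_) measurableSet_Ioi)
    rw [abs_of_pos hx]
  rw [← integrableOn_univ, ← Iio_union_Ici (a := (0 : ℝ))]
  exact hIio.union hIci

theorem integral_eq_zero_of_odd {G : Type*} [MeasurableSpace G] [AddGroup G] [MeasurableNeg G]
    {μ : Measure G} [μ.IsNegInvariant] {f : G → ℝ} (hf : ∀ x, f (-x) = -f x) :
    ∫ x, f x ∂μ = 0 := by
  have h := integral_neg_eq_self f μ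
  simp only [hf, integral_neg] at h
  linarith

section LaplaceKernel

variable {lam : ℝ}

theorem integrable_pow_abs_mul_exp_neg_abs_div (hlam : 0 < lam) (n : ℕ) :
    Integrable fun t : ℝ => |t| ^ n * exp (-|t| / lam) := by
  refine integrable_comp_abs_of_integrableOn_Ioi (f := fun t => t ^ n * exp (-t / lam)) ?_
  refine (integrableOn_rpow_mul_exp_neg_mul_rpow (s := n) (p := 1) (b := 1 / lam)
    (by linarith [n.cast_nonneg (α := ℝ)]) one_pos (by positivity)).congr_fun
    (fun t _ => ?_) measurableSet_Ioi
  simp only [rpow_natCast, rpow_one]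
  ring_nf

theorem integrable_mul_exp_neg_abs_div_of_abs_le (hlam : 0 < lam) {f : ℝ → ℝ} {a b : ℝ}
    (hf : Continuous f) (hfb : ∀ t, |f t| ≤ a + b * |t|) :
    Integrable fun t => f t * exp (-|t| / lam) := by
  have hdom := ((integrable_pow_abs_mul_exp_neg_abs_div hlam 0).const_mul a).add
    ((integrable_pow_abs_mul_exp_neg_abs_div hlam 1).const_mul b)
  refine hdom.mono' (by fun_prop) (ae_of_all _ fun t => ?_)
  simp only [Pi.add_apply, norm_mul, norm_eq_abs, abs_exp, pow_zero, pow_one, one_mul]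
  nlinarith [mul_le_mul_of_nonneg_right (hfb t) (exp_pos (-|t| / lam)).le]

theorem integral_exp_neg_abs_div (hlam : 0 < lam) : ∫ t : ℝ, exp (-|t| / lam) = 2 * lam := by
  have h : ∫ t in Ioi 0, exp (-t / lam) = lam := by
    simpa [neg_div, div_eq_inv_mul] using
      integral_exp_mul_Ioi (neg_lt_zero.mpr (inv_pos.mpr hlam)) 0
  rw [integral_comp_abs (f := fun t => exp (-t / lam)), h]

theorem integral_mul_exp_neg_abs_div : ∫ t : ℝ, t * exp (-|t| / lam) = 0 :=
  integral_eq_zero_of_odd fun t => by rw [abs_neg, neg_mul]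

theorem integral_max_sub_mul_exp_neg_abs_div (hlam : 0 < lam) {c : ℝ} (hc : c ≤ 0) :
    ∫ t : ℝ, max 0 (c - t) * exp (-|t| / lam) = lam ^ 2 * exp (c / lam) := by
  calc ∫ t : ℝ, max 0 (c - t) * exp (-|t| / lam)
      = ∫ u : ℝ, max 0 u * exp (-|c - u| / lam) := by
        rw [← integral_sub_left_eq_self _ volume c]
        simp only [sub_sub_cancel]
    _ = ∫ u in Ioi 0, exp (c / lam) * (u ^ ((2 : ℝ) - 1) * exp (-(1 / lam * u))) := by
        rw [← setIntegral_eq_integral_of_forall_compl_eq_zero fun u hu => by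
          rw [max_eq_left (not_lt.mp hu), zero_mul]]
        refine setIntegral_congr_fun measurableSet_Ioi fun u (hu : 0 < u) => ?_
        rw [max_eq_right hu.le, abs_of_neg (by linarith : c - u < 0),
          show (2 : ℝ) - 1 = 1 by norm_num, rpow_one, mul_left_comm, ← exp_add]
        congr 2
        ring
    _ = lam ^ 2 * exp (c / lam) := by
        rw [integral_const_mul, integral_rpow_mul_exp_neg_mul_Ioi two_pos (by positivity),
          Gamma_two, one_div_one_div]
        norm_num
        ring

theorem integral_add_mul_exp_neg_abs_div (hlam : 0 < lam) (x : ℝ) :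
    ∫ t : ℝ, (x + t) * exp (-|t| / lam) = 2 * lam * x := by
  have hconst : Integrable fun t : ℝ => x * exp (-|t| / lam) := by
    simpa using (integrable_pow_abs_mul_exp_neg_abs_div hlam 0).const_mul x
  have hid : Integrable fun t : ℝ => t * exp (-|t| / lam) :=
    integrable_mul_exp_neg_abs_div_of_abs_le hlam continuous_id (a := 0) (b := 1)
      fun t => by simp
  simp_rw [add_mul]
  rw [integral_add hconst hid, integral_const_mul, integral_exp_neg_abs_div hlam,
    integral_mul_exp_neg_abs_div]
  ring

end LaplaceKernel

theorem clipped_laplace_expectation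
    (lam x ℓ : ℝ) (hlam : 0 < lam) (hℓ : ℓ < x) :
    ∫ t : ℝ, max ℓ (x + t) * ((1 / (2 * lam)) * Real.exp (-|t| / lam)) =
      x + (lam / 2) * Real.exp ((ℓ - x) / lam) := by
  have hsplit : ∀ t, max ℓ (x + t) * (1 / (2 * lam) * exp (-|t| / lam)) =
      1 / (2 * lam) * ((x + t) * exp (-|t| / lam) + max 0 (ℓ - x - t) * exp (-|t| / lam)) :=
    fun t => by
      rw [show max ℓ (x + t) = x + t + max 0 (ℓ - x - t) by
        rw [← max_add_add_left, add_zero, max_comm]; ring_nf]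
      ring
  have hmean : Integrable fun t => (x + t) * exp (-|t| / lam) :=
    integrable_mul_exp_neg_abs_div_of_abs_le hlam (by fun_prop) (a := |x|) (b := 1)
      fun t => by simpa using abs_add_le x t
  have hput : Integrable fun t => max 0 (ℓ - x - t) * exp (-|t| / lam) :=
    integrable_mul_exp_neg_abs_div_of_abs_le hlam (by fun_prop) (a := |ℓ - x|) (b := 1)
      fun t => by
        rw [abs_of_nonneg (le_max_left _ _), one_mul]
        exact max_le (by positivity) (by linarith [le_abs_self (ℓ - x), neg_le_abs t])
  simp_rw [hsplit]
  rw [integral_const_mul, integral_add hmean hput, integral_add_mul_exp_neg_abs_div hlam,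
    integral_max_sub_mul_exp_neg_abs_div hlam (by linarith)]
  field_simp
end

section
/- Composition fairness bound for conjunction: suppose for each entity i the classification errors bᵢ¹ of predicate P¹ lie in [B̲¹, B̲¹ + α₁] and bᵢ² of predicate P² lie in [B̲², B̲² + α₂], all contained in [0, 1/2], and the error of the conjunction for entity i lies between bᵢ¹·bᵢ² and bᵢ¹ + bᵢ² − bᵢ¹·bᵢ². Then the difference between the maximum and minimum conjunction errors over all entities is at most α₁ + B̲¹ + α₂ + B̲² − (α₁ + B̲¹)(α₂ + B̲²) − B̲¹·B̲². -/
/-! Both error bounds are monotone in each argument on `[0, 1]`: the product `x * y` for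
nonnegative arguments, and `x + y - x * y = 1 - (1 - x) * (1 - y)` for arguments at most `1`.
So every conjunction error lies between `B1 * B2` and the inclusion–exclusion bound at the
maximal errors `B1 + α1`, `B2 + α2`, and the spread of the errors is at most the width of
that interval. -/

lemma add_sub_mul_le_add_sub_mul {R : Type*} [CommRing R] [PartialOrder R]
    [IsOrderedRing R] {x x' y y' : R} (hx : x ≤ x') (hy : y ≤ y')
    (hx1 : x' ≤ 1) (hy1 : y' ≤ 1) : x + y - x * y ≤ x' + y' - x' * y' := by
  have h : (1 - x') * (1 - y') ≤ (1 - x) * (1 - y) :=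
    mul_le_mul (sub_le_sub_left hx 1) (sub_le_sub_left hy 1) (sub_nonneg.2 hy1)
      (sub_nonneg.2 (hx.trans hx1))
  calc x + y - x * y = 1 - (1 - x) * (1 - y) := by ring
    _ ≤ 1 - (1 - x') * (1 - y') := sub_le_sub_left h 1
    _ = x' + y' - x' * y' := by ring

lemma ciSup_sub_ciInf_le {ι α : Type*} [Nonempty ι] [ConditionallyCompleteLattice α]
    [AddCommGroup α] [IsOrderedAddMonoid α] {f : ι → α} {L U : α}
    (hL : ∀ i, L ≤ f i) (hU : ∀ i, f i ≤ U) : (⨆ i, f i) - (⨅ i, f i) ≤ U - L :=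
  sub_le_sub (ciSup_le hU) (le_ciInf hL)

theorem conjunction_composition_fairness_bound_general
    {ι : Type*} [Nonempty ι]
    (B1 B2 α1 α2 : ℝ)
    (hB1 : 0 ≤ B1) (hB2 : 0 ≤ B2)
    (h1half : B1 + α1 ≤ 1/2) (h2half : B2 + α2 ≤ 1/2)
    (b1 b2 e : ι → ℝ)
    (hb1 : ∀ i, b1 i ∈ Set.Icc B1 (B1 + α1))
    (hb2 : ∀ i, b2 i ∈ Set.Icc B2 (B2 + α2))
    (he : ∀ i, b1 i * b2 i ≤ e i ∧ e i ≤ b1 i + b2 i - b1 i * b2 i) :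
    (⨆ i, e i) - (⨅ i, e i) ≤
      α1 + B1 + α2 + B2 - (α1 + B1) * (α2 + B2) - B1 * B2 := by
  have hL : ∀ i, B1 * B2 ≤ e i := fun i =>
    (mul_le_mul_of_nonneg (hb1 i).1 (hb2 i).1 hB1 (hB2.trans (hb2 i).1)).trans (he i).1
  have hU : ∀ i, e i ≤ (B1 + α1) + (B2 + α2) - (B1 + α1) * (B2 + α2) := fun i =>
    (he i).2.trans <| add_sub_mul_le_add_sub_mul (hb1 i).2 (hb2 i).2
      (by linarith) (by linarith)
  calc (⨆ i, e i) - (⨅ i, e i)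
      ≤ (B1 + α1) + (B2 + α2) - (B1 + α1) * (B2 + α2) - B1 * B2 :=
        ciSup_sub_ciInf_le hL hU
    _ = α1 + B1 + α2 + B2 - (α1 + B1) * (α2 + B2) - B1 * B2 := by ring

theorem conjunction_composition_fairness_bound
    {ι : Type*} [Fintype ι] [Nonempty ι]
    (B1 B2 α1 α2 : ℝ)
    (hB1 : 0 ≤ B1) (hB2 : 0 ≤ B2) (hα1 : 0 ≤ α1) (hα2 : 0 ≤ α2)
    (h1half : B1 + α1 ≤ 1/2) (h2half : B2 + α2 ≤ 1/2)
    (b1 b2 e : ι → ℝ)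
    (hb1 : ∀ i, b1 i ∈ Set.Icc B1 (B1 + α1))
    (hb2 : ∀ i, b2 i ∈ Set.Icc B2 (B2 + α2))
    (he : ∀ i, b1 i * b2 i ≤ e i ∧ e i ≤ b1 i + b2 i - b1 i * b2 i) :
    (⨆ i, e i) - (⨅ i, e i) ≤
      α1 + B1 + α2 + B2 - (α1 + B1) * (α2 + B2) - B1 * B2 :=
  conjunction_composition_fairness_bound_general B1 B2 α1 α2 hB1 hB2 h1half h2half b1 b2 e hb1 hb2
    he
end

section
/- Composition fairness bound for XOR: suppose for each entity i the error of the XOR predicate equals bᵢ¹ + bᵢ² − 2·bᵢ¹·bᵢ², where bᵢ¹ ∈ [B̲¹, B̲¹ + α₁] ⊆ [0, 1/2] and bᵢ² ∈ [B̲², B̲² + α₂] ⊆ [0, 1/2]. Then the difference between the maximum and minimum XOR errors over entities is at most α₁(1 − 2B̲²) + α₂(1 − 2B̲¹) − 2α₁α₂. In particular, if α₁ = α₂ = 0 then the XOR error is identical across all entities. -/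
/-! On `b ≤ 1/2` the XOR error `a + b - 2ab` is nondecreasing in `a` (its slope is `1 - 2b`), and
symmetrically in `b`. Hence every entity's XOR error lies between its values at the corners
`(B̲¹, B̲²)` and `(B̲¹ + α₁, B̲² + α₂)` of the box, and the spread of the errors is bounded by the
difference of these two values. -/

def xorError (a b : ℝ) : ℝ := a + b - 2 * a * b

lemma xorError_comm (a b : ℝ) : xorError a b = xorError b a := by
  unfold xorError; ring

lemma xorError_le_xorError_left {a a' b : ℝ} (ha : a ≤ a') (hb : b ≤ 1 / 2) :
    xorError a b ≤ xorError a' b := by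
  have : xorError a' b - xorError a b = (a' - a) * (1 - 2 * b) := by unfold xorError; ring
  nlinarith

lemma xorError_le_xorError {a a' b b' : ℝ} (ha : a ≤ a') (hb : b ≤ b')
    (ha' : a' ≤ 1 / 2) (hb_half : b ≤ 1 / 2) : xorError a b ≤ xorError a' b' :=
  calc xorError a b ≤ xorError a' b := xorError_le_xorError_left ha hb_half
    _ = xorError b a' := xorError_comm _ _
    _ ≤ xorError b' a' := xorError_le_xorError_left hb ha'
    _ = xorError a' b' := xorError_comm _ _

lemma xorError_add_sub_xorError (a b α β : ℝ) :
    xorError (a + α) (b + β) - xorError a b = α * (1 - 2 * b) + β * (1 - 2 * a) - 2 * α * β := by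
  unfold xorError; ring

lemma ciSup_sub_ciInf_le_of_mem_Icc {ι : Type*} [Nonempty ι] {f : ι → ℝ} {m M : ℝ}
    (hf : ∀ i, f i ∈ Set.Icc m M) : (⨆ i, f i) - (⨅ i, f i) ≤ M - m :=
  sub_le_sub (ciSup_le fun i => (hf i).2) (le_ciInf fun i => (hf i).1)

theorem xor_composition_fairness_bound_general
    {ι : Type*} [Nonempty ι]
    (B1 B2 α1 α2 : ℝ)
    (h1half : B1 + α1 ≤ 1/2) (h2half : B2 + α2 ≤ 1/2)
    (b1 b2 e : ι → ℝ)
    (hb1 : ∀ i, b1 i ∈ Set.Icc B1 (B1 + α1))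
    (hb2 : ∀ i, b2 i ∈ Set.Icc B2 (B2 + α2))
    (he : ∀ i, e i = b1 i + b2 i - 2 * b1 i * b2 i) :
    ((⨆ i, e i) - (⨅ i, e i) ≤
      α1 * (1 - 2 * B2) + α2 * (1 - 2 * B1) - 2 * α1 * α2) ∧
    (α1 = 0 → α2 = 0 → ∀ i j, e i = e j) := by
  have he_mem : ∀ i, e i ∈ Set.Icc (xorError B1 B2) (xorError (B1 + α1) (B2 + α2)) := by
    intro i
    obtain ⟨hb1_lo, hb1_hi⟩ := hb1 i
    obtain ⟨hb2_lo, hb2_hi⟩ := hb2 i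
    have hb2_half : b2 i ≤ 1 / 2 := hb2_hi.trans h2half
    rw [he i]
    exact ⟨xorError_le_xorError hb1_lo hb2_lo (hb1_hi.trans h1half)
        (hb2_lo.trans hb2_half),
      xorError_le_xorError hb1_hi hb2_hi h1half hb2_half⟩
  refine ⟨?_, fun h1 h2 i j => ?_⟩
  · rw [← xorError_add_sub_xorError]
    exact ciSup_sub_ciInf_le_of_mem_Icc he_mem
  · subst h1 h2
    simp only [add_zero, Set.Icc_self, Set.mem_singleton_iff] at he_mem
    rw [he_mem i, he_mem j]

theorem xor_composition_fairness_bound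
    {ι : Type*} [Fintype ι] [Nonempty ι]
    (B1 B2 α1 α2 : ℝ)
    (hB1 : 0 ≤ B1) (hB2 : 0 ≤ B2) (hα1 : 0 ≤ α1) (hα2 : 0 ≤ α2)
    (h1half : B1 + α1 ≤ 1/2) (h2half : B2 + α2 ≤ 1/2)
    (b1 b2 e : ι → ℝ)
    (hb1 : ∀ i, b1 i ∈ Set.Icc B1 (B1 + α1))
    (hb2 : ∀ i, b2 i ∈ Set.Icc B2 (B2 + α2))
    (he : ∀ i, e i = b1 i + b2 i - 2 * b1 i * b2 i) :
    ((⨆ i, e i) - (⨅ i, e i) ≤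
      α1 * (1 - 2 * B2) + α2 * (1 - 2 * B1) - 2 * α1 * α2) ∧
    (α1 = 0 → α2 = 0 → ∀ i j, e i = e j) :=
  xor_composition_fairness_bound_general B1 B2 α1 α2 h1half h2half b1 b2 e hb1 hb2 he
end

section
/- Sensitivity of the normalized weighted-count query: let a₁,…,aₙ > 0 with a_max = maxᵢ aᵢ, and suppose datasets x, x' ∈ ℕⁿ differ in exactly one coordinate i with x'ᵢ = xᵢ − 1, and both Σⱼ aⱼxⱼ ≥ L > a_max and Σⱼ aⱼx'ⱼ ≥ L − a_max > 0. Define Pₖ(x) = aₖxₖ / (Σⱼ aⱼxⱼ). Then Σₖ |Pₖ(x) − Pₖ(x')| ≤ 2·a_max / L. -/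
/-!
Write `u = (aₖxₖ)ₖ`, `v = (aₖx'ₖ)ₖ` with totals `Z ≥ Z'`, so `0 ≤ v ≤ u` and `Z - Z' = aᵢ`.
By the triangle inequality through `v / Z`,
`‖u/Z - v/Z'‖₁ ≤ ‖u - v‖₁ / Z + Z' · |1/Z - 1/Z'| = 2 (Z - Z') / Z = 2 aᵢ / Z ≤ 2 a_max / L`.
-/

open Finset

lemma mul_abs_inv_sub_inv_le {U V : ℝ} (hV : 0 ≤ V) (hVU : V ≤ U) :
    V * |U⁻¹ - V⁻¹| ≤ (U - V) / U := by
  rcases hV.eq_or_lt with rfl | hVpos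
  · simpa using div_nonneg hVU hVU
  have hUpos : 0 < U := hVpos.trans_le hVU
  rw [abs_of_nonpos (sub_nonpos.2 (inv_anti₀ hVpos hVU))]
  field_simp
  linarith

lemma sum_abs_div_sum_sub_div_sum_le {ι : Type*} (s : Finset ι) (u v : ι → ℝ)
    (hv : ∀ k ∈ s, 0 ≤ v k) (hvu : ∀ k ∈ s, v k ≤ u k) :
    ∑ k ∈ s, |u k / ∑ j ∈ s, u j - v k / ∑ j ∈ s, v j|
      ≤ 2 * (∑ j ∈ s, u j - ∑ j ∈ s, v j) / ∑ j ∈ s, u j := by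
  set U := ∑ j ∈ s, u j
  set V := ∑ j ∈ s, v j
  have hV : 0 ≤ V := sum_nonneg hv
  have hVU : V ≤ U := sum_le_sum hvu
  have hmass : ∑ k ∈ s, |u k / U - v k / U| = (U - V) / U := by
    rw [← sum_sub_distrib, sum_div]
    refine sum_congr rfl fun k hk => ?_
    rw [← sub_div, abs_of_nonneg (div_nonneg (sub_nonneg.2 (hvu k hk)) (hV.trans hVU))]
  have hscale : ∑ k ∈ s, |v k / U - v k / V| = V * |U⁻¹ - V⁻¹| := by
    simp_rw [div_eq_mul_inv, ← mul_sub, abs_mul, ← sum_mul]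
    exact congrArg (· * _) (sum_congr rfl fun k hk => abs_of_nonneg (hv k hk))
  calc ∑ k ∈ s, |u k / U - v k / V|
      ≤ ∑ k ∈ s, (|u k / U - v k / U| + |v k / U - v k / V|) :=
        sum_le_sum fun k _ => abs_sub_le _ _ _
    _ = (U - V) / U + V * |U⁻¹ - V⁻¹| := by rw [sum_add_distrib, hmass, hscale]
    _ ≤ (U - V) / U + (U - V) / U := by gcongr; exact mul_abs_inv_sub_inv_le hV hVU
    _ = 2 * (U - V) / U := by ring

theorem allotment_query_sensitivity_general
    {n : ℕ} (a : Fin n → ℝ) (ha : ∀ j, 0 < a j)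
    (hne : (Finset.univ : Finset (Fin n)).Nonempty)
    (amax : ℝ) (hamax : amax = Finset.univ.sup' hne a)
    (x x' : Fin n → ℕ) (i : Fin n)
    (hxi' : (x' i : ℤ) = (x i : ℤ) - 1) (hxj : ∀ j, j ≠ i → x' j = x j)
    (L : ℝ) (hL : amax < L) (hZ : L ≤ ∑ j, a j * (x j : ℝ)) :
    ∑ k, |a k * (x k : ℝ) / (∑ j, a j * (x j : ℝ)) -
          a k * (x' k : ℝ) / (∑ j, a j * (x' j : ℝ))| ≤ 2 * amax / L := by
  have hxi : (x' i : ℝ) = x i - 1 := by exact_mod_cast hxi'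
  have hx'x : ∀ k, (x' k : ℝ) ≤ x k := fun k => by
    rcases eq_or_ne k i with rfl | hk
    · linarith
    · rw [hxj k hk]
  have hmass : ∑ j, a j * (x j : ℝ) - ∑ j, a j * (x' j : ℝ) = a i := by
    rw [← sum_sub_distrib, sum_eq_single i (fun k _ hk => by rw [hxj k hk, sub_self])
      (fun h => absurd (mem_univ i) h), hxi]
    ring
  have hai : a i ≤ amax := hamax ▸ le_sup' a (mem_univ i)
  calc _ ≤ 2 * (∑ j, a j * (x j : ℝ) - ∑ j, a j * (x' j : ℝ)) / ∑ j, a j * (x j : ℝ) :=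
        sum_abs_div_sum_sub_div_sum_le _ _ _
          (fun k _ => mul_nonneg (ha k).le (Nat.cast_nonneg _))
          (fun k _ => mul_le_mul_of_nonneg_left (hx'x k) (ha k).le)
    _ ≤ 2 * amax / L := by
      have hamax_pos : 0 < amax := (ha i).trans_le hai
      rw [hmass]
      gcongr
      exact hamax_pos.trans hL

theorem allotment_query_sensitivity
    {n : ℕ} (a : Fin n → ℝ) (ha : ∀ j, 0 < a j)
    (hne : (Finset.univ : Finset (Fin n)).Nonempty)
    (amax : ℝ) (hamax : amax = Finset.univ.sup' hne a)
    (x x' : Fin n → ℕ) (i : Fin n) (hxi : 1 ≤ x i)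
    (hxi' : (x' i : ℤ) = (x i : ℤ) - 1) (hxj : ∀ j, j ≠ i → x' j = x j)
    (L : ℝ) (hL : amax < L) (hZ : L ≤ ∑ j, a j * (x j : ℝ))
    (hL' : 0 < L - amax) (hZ' : L - amax ≤ ∑ j, a j * (x' j : ℝ)) :
    ∑ k, |a k * (x k : ℝ) / (∑ j, a j * (x j : ℝ)) -
          a k * (x' k : ℝ) / (∑ j, a j * (x' j : ℝ))| ≤ 2 * amax / L :=
  allotment_query_sensitivity_general a ha hne amax hamax x x' i hxi' hxj L hL hZ
end
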